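/- Exchange argument for optimality: if g is an optimal injection for coefficients a and there exist a screen s and an unused configuration f (f ∉ range g) with a(s,f) > a(s,g(s)), replacing g(s) by f yields a feasible assignment with strictly larger objective — contradiction; hence for an optimal g, a(s,f) ≤ a(s,g(s)) for every s and every unused f. -/
import Mathlib


/-- Exchange argument: at an optimal injection `g`, no screen `s` prefers any
unused configuration `f ∉ range g` to its assigned one. -/
theorem film_scheduling_exchange (S F : ℕ) (hSF : S ≤ F)
    (a : Fin S → Fin F → ℝ) (g : Fin S ↪ Fin F)
    (hopt : ∀ h : Fin S ↪ Fin F, ∑ s, a s (h s) ≤ ∑ s, a s (g s)) :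
    ∀ s : Fin S, ∀ f : Fin F, f ∉ Set.range g → a s f ≤ a s (g s) := by
  intro s f hf
  by_contra hlt
  push_neg at hlt
  have hinj : Function.Injective (Function.update (⇑g) s f) := by
    intro x y hxy
    by_cases hx : x = s <;> by_cases hy : y = s
    · rw [hx, hy]
    · exfalso; apply hf
      rw [Function.update_apply, Function.update_apply, if_pos hx, if_neg hy] at hxy
      exact ⟨y, hxy.symm⟩
    · exfalso; apply hf
      rw [Function.update_apply, Function.update_apply, if_neg hx, if_pos hy] at hxy
      exact ⟨x, hxy⟩
    · rw [Function.update_apply, Function.update_apply, if_neg hx, if_neg hy] at hxy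
      exact g.injective hxy
  have h := hopt ⟨Function.update (⇑g) s f, hinj⟩
  simp only [Function.Embedding.coeFn_mk] at h
  have hsum : ∑ t, a t (Function.update (⇑g) s f t) - ∑ t, a t (g t)
      = a s f - a s (g s) := by
    rw [← Finset.sum_sub_distrib]
    rw [Finset.sum_eq_single s]
    · simp
    · intro t _ ht
      rw [Function.update_of_ne ht]; ring
    · simp
  linarith
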